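/- PSSf inequality chain (Lemma 1): suppose γ is an extended class K-infinity function, ρ > 0 with ρ ≤ -γ(-ρ), and suppose for all x that L̂(x) ≥ -γ(h̄(x)) (nominal CBF condition for h̄) and |δ(x)| ≤ ρ. Then for all x, L̂(x) + δ(x) ≥ -γ_PSSf(h̄(x) + ρ), where γ_PSSf(s) = γ(s - ρ) - γ(-ρ). -/
import Mathlib


open Filter

def ExtKInf (γ : ℝ → ℝ) : Prop :=
  Continuous γ ∧ StrictMono γ ∧ γ 0 = 0 ∧
    Tendsto γ atTop atTop ∧ Tendsto γ atBot atBot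

theorem pssf_inequality_chain {n : ℕ} (γ : ℝ → ℝ) (hγ : ExtKInf γ)
    (ρ : ℝ) (hρ : 0 < ρ) (hργ : ρ ≤ -γ (-ρ))
    (hbar : (Fin n → ℝ) → ℝ) (Lhat δ : (Fin n → ℝ) → ℝ)
    (hL : ∀ x, Lhat x ≥ -γ (hbar x))
    (hδ : ∀ x, |δ x| ≤ ρ) :
    ∀ x, Lhat x + δ x ≥ -(γ ((hbar x + ρ) - ρ) - γ (-ρ)) := by
  intro x
  have h1 := hL x
  have h2 : δ x ≥ γ (-ρ) := by
    have := abs_le.mp (hδ x)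
    linarith
  simp only [add_sub_cancel_right]
  linarith
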